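/- Let F be the cumulative distribution function of the standard Gaussian measure on ℝ, φ = F' its density, and U = φ ∘ F⁻¹ the Gaussian isoperimetry function on (0,1). Then U is twice differentiable on (0,1) and satisfies the differential equation U''(x) = −1/U(x) for every x ∈ (0,1). -/

import Mathlib

open MeasureTheory

/-- The standard Gaussian density `φ(t) = (2π)^{−1/2} e^{−t²/2}`. -/
noncomputable def gaussPdf (t : ℝ) : ℝ :=
  (Real.sqrt (2 * Real.pi))⁻¹ * Real.exp (-t ^ 2 / 2)

/-- The standard Gaussian cumulative distribution function
`F(t) = ∫_{−∞}^{t} (2π)^{−1/2} e^{−s²/2} ds`. -/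
noncomputable def gaussCdf (t : ℝ) : ℝ :=
  ∫ s in Set.Iic t, gaussPdf s

/-- The inverse `F⁻¹ : (0,1) → ℝ` of the standard Gaussian cdf. -/
noncomputable def gaussCdfInv : ℝ → ℝ :=
  Function.invFun gaussCdf

/-- The Gaussian isoperimetry function `U = φ ∘ F⁻¹` on `(0,1)`. -/
noncomputable def isoU (x : ℝ) : ℝ :=
  gaussPdf (gaussCdfInv x)

/-!
Since `F' = φ` and `φ'(t) = -t φ(t)`, the inverse function rule gives
`(F⁻¹)' = 1 / φ ∘ F⁻¹ = 1 / U` on `(0,1) = range F`, and the chain rule then gives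
`U' = (φ' ∘ F⁻¹) / (φ ∘ F⁻¹) = -F⁻¹`.
Differentiating once more, `U'' = -(F⁻¹)' = -1 / U`.
-/

open Set Filter Topology Function

section IntegralIic

variable {E : Type*} [NormedAddCommGroup E] [NormedSpace ℝ E] {f : ℝ → E}

theorem hasDerivAt_integral_Iic [CompleteSpace E] (hf : Continuous f) (hfi : Integrable f)
    (t : ℝ) :
    HasDerivAt (fun u => ∫ s in Iic u, f s) (f t) t := by
  have hsplit : (fun u => ∫ s in Iic u, f s) =
      fun u => (∫ s in Iic 0, f s) + ∫ s in (0 : ℝ)..u, f s := by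
    funext u
    rw [← intervalIntegral.integral_Iic_sub_Iic hfi.integrableOn hfi.integrableOn,
      add_sub_cancel]
  rw [hsplit]
  exact (intervalIntegral.integral_hasDerivAt_right (hf.intervalIntegrable _ _)
    (hf.stronglyMeasurableAtFilter _ _) hf.continuousAt).const_add _

theorem tendsto_integral_Iic_atTop {μ : Measure ℝ} (hfi : Integrable f μ) :
    Tendsto (fun u => ∫ s in Iic u, f s ∂μ) atTop (𝓝 (∫ s, f s ∂μ)) :=
  (aecover_Iic tendsto_id).integral_tendsto_of_countably_generated hfi

end IntegralIic

section InverseOfStrictMono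

variable {α β : Type*} [LinearOrder α] [TopologicalSpace α]
  [LinearOrder β] [TopologicalSpace β] [OrderTopology β] {F : α → β}

theorem StrictMono.range_eq_Ioo_of_tendsto [Nonempty α] [NoMinOrder α] [NoMaxOrder α]
    [PreconnectedSpace α] (hF : StrictMono F) (hFc : Continuous F) {a b : β}
    (ha : Tendsto F atBot (𝓝 a)) (hb : Tendsto F atTop (𝓝 b)) : range F = Ioo a b := by
  ext x
  constructor
  · rintro ⟨t, rfl⟩
    obtain ⟨s, hs⟩ := exists_lt t
    obtain ⟨u, hu⟩ := exists_gt t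
    exact ⟨(hF.monotone.le_of_tendsto ha s).trans_lt (hF hs),
      (hF hu).trans_le (hF.monotone.ge_of_tendsto hb u)⟩
  · rintro ⟨hax, hxb⟩
    exact mem_range_of_exists_le_of_exists_ge hFc
      (ha.eventually (eventually_le_nhds hax)).exists
      (hb.eventually (eventually_ge_nhds hxb)).exists

theorem StrictMono.continuousAt_invFun [OrderTopology α] [Nonempty α] [DenselyOrdered α]
    (hF : StrictMono F) {x : β} (hx : range F ∈ 𝓝 x) : ContinuousAt (invFun F) x := by
  have hinv := leftInverse_invFun hF.injective
  have hmono : StrictMonoOn (invFun F) (range F) := by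
    rintro _ ⟨s, rfl⟩ _ ⟨t, rfl⟩ hst
    rw [hinv s, hinv t]
    exact hF.lt_iff_lt.1 hst
  refine hmono.continuousAt_of_image_mem_nhds hx ?_
  rw [← range_comp, hinv.comp_eq_id, range_id]
  exact univ_mem

end InverseOfStrictMono

theorem StrictMono.hasDerivAt_invFun {F : ℝ → ℝ} {F' x : ℝ} (hF : StrictMono F)
    (hx : range F ∈ 𝓝 x) (hder : HasDerivAt F F' (invFun F x)) (hF' : F' ≠ 0) :
    HasDerivAt (invFun F) F'⁻¹ x :=
  hder.of_local_left_inverse (hF.continuousAt_invFun hx) hF'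
    (mem_of_superset hx fun _ hy => invFun_eq hy)

open ProbabilityTheory

theorem gaussPdf_eq_gaussianPDFReal : gaussPdf = gaussianPDFReal 0 1 := by
  funext t
  simp [gaussPdf, gaussianPDFReal]

theorem gaussPdf_pos (t : ℝ) : 0 < gaussPdf t := by
  rw [gaussPdf_eq_gaussianPDFReal]
  exact gaussianPDFReal_pos _ _ _ one_ne_zero

theorem continuous_gaussPdf : Continuous gaussPdf := by
  unfold gaussPdf
  fun_prop

theorem integrable_gaussPdf : Integrable gaussPdf := by
  rw [gaussPdf_eq_gaussianPDFReal]
  exact integrable_gaussianPDFReal _ _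

theorem integral_gaussPdf : ∫ t, gaussPdf t = 1 := by
  rw [gaussPdf_eq_gaussianPDFReal]
  exact integral_gaussianPDFReal_eq_one _ one_ne_zero

theorem hasDerivAt_gaussPdf (t : ℝ) : HasDerivAt gaussPdf (-t * gaussPdf t) t := by
  refine ((((hasDerivAt_pow 2 t).neg).div_const 2).exp.const_mul
    (Real.sqrt (2 * Real.pi))⁻¹).congr_deriv ?_
  simp only [gaussPdf, Pi.neg_apply]
  ring

theorem hasDerivAt_gaussCdf (t : ℝ) : HasDerivAt gaussCdf (gaussPdf t) t :=
  hasDerivAt_integral_Iic continuous_gaussPdf integrable_gaussPdf t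

theorem strictMono_gaussCdf : StrictMono gaussCdf :=
  strictMono_of_hasDerivAt_pos hasDerivAt_gaussCdf gaussPdf_pos

theorem range_gaussCdf : range gaussCdf = Ioo 0 1 :=
  strictMono_gaussCdf.range_eq_Ioo_of_tendsto
    (Differentiable.continuous fun t => (hasDerivAt_gaussCdf t).differentiableAt)
    (tendsto_integral_Iic_zero tendsto_id)
    (integral_gaussPdf ▸ tendsto_integral_Iic_atTop integrable_gaussPdf)

theorem hasDerivAt_gaussCdfInv {x : ℝ} (hx : x ∈ Ioo 0 1) :
    HasDerivAt gaussCdfInv (isoU x)⁻¹ x :=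
  strictMono_gaussCdf.hasDerivAt_invFun (range_gaussCdf ▸ isOpen_Ioo.mem_nhds hx)
    (hasDerivAt_gaussCdf _) (gaussPdf_pos _).ne'

theorem hasDerivAt_isoU {x : ℝ} (hx : x ∈ Ioo 0 1) : HasDerivAt isoU (-gaussCdfInv x) x := by
  refine ((hasDerivAt_gaussPdf _).comp x (hasDerivAt_gaussCdfInv hx)).congr_deriv ?_
  rw [isoU, mul_assoc, mul_inv_cancel₀ (gaussPdf_pos _).ne', mul_one]

theorem isoU_second_deriv (x : ℝ) (hx : x ∈ Set.Ioo (0 : ℝ) 1) :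
    DifferentiableAt ℝ isoU x ∧ HasDerivAt (deriv isoU) (-(1 / isoU x)) x := by
  have hderiv : deriv isoU =ᶠ[𝓝 x] fun y => -gaussCdfInv y :=
    eventually_of_mem (isOpen_Ioo.mem_nhds hx) fun y hy => (hasDerivAt_isoU hy).deriv
  refine ⟨(hasDerivAt_isoU hx).differentiableAt, ?_⟩
  rw [one_div]
  exact (hasDerivAt_gaussCdfInv hx).neg.congr_of_eventuallyEq hderiv
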